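/- Let S, A, T, 𝒫 be as in the MDP context. Let V1, V2, V_Σ : S × 𝒫 → ℝ be mixture-affine and satisfy the generalized Bellman form with reward/discount pairs (R1, γ1), (R2, γ2), (R_Σ, γ_Σ) respectively. Fix (s,a) ∈ S × A and suppose the conflict condition holds for (V1, V2) at (s,a). Suppose there are weights w1(s) ≠ 0, w2(s) ≠ 0 with V_Σ(s, a·Π) = w1(s)·V1(s, a·Π) + w2(s)·V2(s, a·Π) for all Π ∈ 𝒫, and suppose there are next-step weights w1(sa), w2(sa) and a constant k ∈ ℝ with V̄_Σ(s,a,Π) = k + w1(sa)·V̄1(s,a,Π) + w2(sa)·V̄2(s,a,Π) for all Π ∈ 𝒫. Then w1(s)·γ1(s,a) = w1(sa)·γ_Σ(s,a) and w2(s)·γ2(s,a) = w2(sa)·γ_Σ(s,a); consequently, if w1(sa), w1(s), γ1(s,a), and γ_Σ(s,a) are all nonzero, then w2(sa)/w1(sa) = (w2(s)·γ2(s,a))/(w1(s)·γ1(s,a)). -/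

import Mathlib

open scoped BigOperators

/-- The one-step expected value `V̄(s,a,π) = E_{s' ~ T(s,a)}[V(s',π)]`. -/
noncomputable def Vbar {S A P : Type*} [Fintype S]
    (T : S → A → S → ℝ) (V : S → P → ℝ) (s : S) (a : A) (π : P) : ℝ :=
  ∑ s', T s a s' * V s' π

/-- `V` is mixture-affine with respect to the policy-mixing operation `mix`. -/
def MixAffine {S P : Type*} (mix : ℝ → P → P → P) (V : S → P → ℝ) : Prop :=
  ∀ (s : S) (β : ℝ), 0 ≤ β → β ≤ 1 → ∀ π ω : P,
    V s (mix β π ω) = β * V s π + (1 - β) * V s ω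

/-- `V` satisfies the generalized Bellman form with reward `R` and discount `γ`. -/
def BellmanForm {S A P : Type*} [Fintype S] (T : S → A → S → ℝ) (act : A → P → P)
    (V : S → P → ℝ) (R : S → A → ℝ) (γ : S → A → ℝ) : Prop :=
  ∀ (s : S) (a : A) (π : P), V s (act a π) = R s a + γ s a * Vbar T V s a π

/-- The conflict condition for `(V1, V2)` at `(s, a)`: there are policies `π, ω, l`
on which the one-step expected values of `V1` and `V2` are oppositely ordered, with
non-symmetric crossing points `β1 ≠ β2`. -/
def Conflict {S A P : Type*} [Fintype S]
    (T : S → A → S → ℝ) (V1 V2 : S → P → ℝ) (s : S) (a : A) : Prop :=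
  ∃ π ω l : P,
    Vbar T V1 s a π > Vbar T V1 s a l ∧ Vbar T V1 s a l > Vbar T V1 s a ω ∧
    Vbar T V2 s a ω > Vbar T V2 s a l ∧ Vbar T V2 s a l > Vbar T V2 s a π ∧
    (Vbar T V1 s a l - Vbar T V1 s a ω) / (Vbar T V1 s a π - Vbar T V1 s a ω) ≠
      (Vbar T V2 s a l - Vbar T V2 s a ω) / (Vbar T V2 s a π - Vbar T V2 s a ω)

/-!
Expanding both sides of `Vagg(s, a·π) = w1(s)·V1(s, a·π) + w2(s)·V2(s, a·π)` with the three
Bellman forms and the next-step decomposition shows that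
`(w1(s)γ1 - w1(sa)γagg)·V̄1(s,a,π) + (w2(s)γ2 - w2(sa)γagg)·V̄2(s,a,π)` does not depend on `π`.
On the three policies of the conflict condition the differences of `(V̄1, V̄2)` form a
nonsingular 2×2 system (its determinant vanishes exactly when `β1 = β2`), so both coefficients
vanish. The ratio identity follows by cancelling `γagg(s,a)`.
-/

lemma eq_zero_and_eq_zero_of_det_ne_zero {K : Type*} [Field K] {u₁ u₂ v₁ v₂ c₁ c₂ : K}
    (hdet : u₁ * v₂ - v₁ * u₂ ≠ 0)
    (hu : c₁ * u₁ + c₂ * u₂ = 0) (hv : c₁ * v₁ + c₂ * v₂ = 0) :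
    c₁ = 0 ∧ c₂ = 0 := by
  have h₁ : c₁ * (u₁ * v₂ - v₁ * u₂) = 0 := by linear_combination v₂ * hu - u₂ * hv
  have h₂ : c₂ * (u₁ * v₂ - v₁ * u₂) = 0 := by linear_combination u₁ * hv - v₁ * hu
  exact ⟨(mul_eq_zero.mp h₁).resolve_right hdet, (mul_eq_zero.mp h₂).resolve_right hdet⟩

lemma Conflict.eq_zero_of_forall_linear_combination_eq {S A P : Type*} [Fintype S]
    {T : S → A → S → ℝ} {V1 V2 : S → P → ℝ} {s : S} {a : A} (hconf : Conflict T V1 V2 s a)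
    {c₁ c₂ C : ℝ} (hC : ∀ π : P, c₁ * Vbar T V1 s a π + c₂ * Vbar T V2 s a π = C) :
    c₁ = 0 ∧ c₂ = 0 := by
  obtain ⟨π, ω, l, hπl₁, hlω₁, hωl₂, hlπ₂, hβ⟩ := hconf
  have hdet : (Vbar T V1 s a π - Vbar T V1 s a ω) * (Vbar T V2 s a l - Vbar T V2 s a ω) -
      (Vbar T V1 s a l - Vbar T V1 s a ω) * (Vbar T V2 s a π - Vbar T V2 s a ω) ≠ 0 := by
    rw [Ne, div_eq_div_iff (by linarith) (by linarith)] at hβ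
    exact sub_ne_zero.mpr fun h => hβ (by linarith)
  exact eq_zero_and_eq_zero_of_det_ne_zero hdet
    (by linear_combination hC π - hC ω) (by linear_combination hC l - hC ω)

lemma discount_gap_combination_eq {S A P : Type*} [Fintype S] {T : S → A → S → ℝ}
    {act : A → P → P} {V1 V2 Vagg : S → P → ℝ} {R1 R2 Ragg γ1 γ2 γagg : S → A → ℝ}
    (hB1 : BellmanForm T act V1 R1 γ1) (hB2 : BellmanForm T act V2 R2 γ2)
    (hBagg : BellmanForm T act Vagg Ragg γagg) {s : S} {a : A} {w1s w2s w1sa w2sa k : ℝ}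
    (hagg : ∀ π : P, Vagg s (act a π) = w1s * V1 s (act a π) + w2s * V2 s (act a π))
    (hnext : ∀ π : P, Vbar T Vagg s a π =
        k + w1sa * Vbar T V1 s a π + w2sa * Vbar T V2 s a π) (π : P) :
    (w1s * γ1 s a - w1sa * γagg s a) * Vbar T V1 s a π +
        (w2s * γ2 s a - w2sa * γagg s a) * Vbar T V2 s a π =
      Ragg s a + γagg s a * k - w1s * R1 s a - w2s * R2 s a := by
  have h := hagg π
  rw [hBagg, hB1, hB2, hnext] at h
  linear_combination -h

theorem weight_update_equalities_general
    {S A P : Type*} [Fintype S]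
    (T : S → A → S → ℝ)
    (act : A → P → P)
    (V1 V2 Vagg : S → P → ℝ)
    (R1 R2 Ragg γ1 γ2 γagg : S → A → ℝ)
    (hB1 : BellmanForm T act V1 R1 γ1)
    (hB2 : BellmanForm T act V2 R2 γ2)
    (hBagg : BellmanForm T act Vagg Ragg γagg)
    (s : S) (a : A) (hconf : Conflict T V1 V2 s a)
    (w1s w2s : ℝ)
    (hagg : ∀ π : P, Vagg s (act a π) = w1s * V1 s (act a π) + w2s * V2 s (act a π))
    (w1sa w2sa k : ℝ)
    (hnext : ∀ π : P, Vbar T Vagg s a π =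
        k + w1sa * Vbar T V1 s a π + w2sa * Vbar T V2 s a π) :
    w1s * γ1 s a = w1sa * γagg s a ∧ w2s * γ2 s a = w2sa * γagg s a ∧
      (w1sa ≠ 0 → γ1 s a ≠ 0 → γagg s a ≠ 0 →
        w2sa / w1sa = (w2s * γ2 s a) / (w1s * γ1 s a)) := by
  obtain ⟨h₁, h₂⟩ := hconf.eq_zero_of_forall_linear_combination_eq
    (discount_gap_combination_eq hB1 hB2 hBagg hagg hnext)
  rw [sub_eq_zero] at h₁ h₂
  refine ⟨h₁, h₂, fun _ _ hγagg => ?_⟩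
  rw [h₁, h₂, mul_div_mul_right _ _ hγagg]

/-- **Weight-update equalities (Theorem 5, equation (11)).** Under the conflict
condition at `(s, a)`, if `Vagg(s, a·π) = w1(s)·V1(s, a·π) + w2(s)·V2(s, a·π)` and
`V̄agg(s,a,·) = k + w1(sa)·V̄1(s,a,·) + w2(sa)·V̄2(s,a,·)`, then
`w1(s)·γ1(s,a) = w1(sa)·γagg(s,a)` and `w2(s)·γ2(s,a) = w2(sa)·γagg(s,a)`; consequently,
when the relevant quantities are nonzero, `w2(sa)/w1(sa) = w2(s)·γ2(s,a)/(w1(s)·γ1(s,a))`. -/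
theorem weight_update_equalities
    {S A P : Type*} [Fintype S] [Nonempty S] [Fintype A] [Nonempty A]
    (T : S → A → S → ℝ)
    (hT0 : ∀ s a s', 0 ≤ T s a s') (hT1 : ∀ s a, ∑ s', T s a s' = 1)
    (act : A → P → P) (mix : ℝ → P → P → P)
    (hact_mix : ∀ (a : A) (β : ℝ) (π ω : P), act a (mix β π ω) = mix β (act a π) (act a ω))
    (V1 V2 Vagg : S → P → ℝ)
    (haff1 : MixAffine mix V1) (haff2 : MixAffine mix V2) (haffagg : MixAffine mix Vagg)
    (R1 R2 Ragg γ1 γ2 γagg : S → A → ℝ)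
    (hB1 : BellmanForm T act V1 R1 γ1)
    (hB2 : BellmanForm T act V2 R2 γ2)
    (hBagg : BellmanForm T act Vagg Ragg γagg)
    (s : S) (a : A) (hconf : Conflict T V1 V2 s a)
    (w1s w2s : ℝ) (hw1s : w1s ≠ 0) (hw2s : w2s ≠ 0)
    (hagg : ∀ π : P, Vagg s (act a π) = w1s * V1 s (act a π) + w2s * V2 s (act a π))
    (w1sa w2sa k : ℝ)
    (hnext : ∀ π : P, Vbar T Vagg s a π =
        k + w1sa * Vbar T V1 s a π + w2sa * Vbar T V2 s a π) :
    w1s * γ1 s a = w1sa * γagg s a ∧ w2s * γ2 s a = w2sa * γagg s a ∧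
      (w1sa ≠ 0 → γ1 s a ≠ 0 → γagg s a ≠ 0 →
        w2sa / w1sa = (w2s * γ2 s a) / (w1s * γ1 s a)) :=
  weight_update_equalities_general T act V1 V2 Vagg R1 R2 Ragg γ1 γ2 γagg hB1 hB2 hBagg s a hconf
    w1s w2s hagg w1sa w2sa k hnext
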